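/- Let c < d be real numbers, M > 0 with √M·(d − c) ≤ π/2, and a ∈ L¹(c,d). Suppose u : [c,d] → ℝ is a nontrivial solution of u''(x) + a(x)u(x) = 0 on (c,d) with u(c) = 0, u'(d) = 0, and u(x) ≠ 0 and u'(x) ≠ 0 for all x ∈ (c,d). Then ∫_c^d |a(x) − M| dx ≥ √M · cot(√M·(d − c)). -/

import Mathlib

/-! With `s x = sin (√M * (x - c))`, a solution of `s'' + M s = 0` with `s c = 0`, the Lagrange
identity for the two equations turns `u c = 0 = v d` into
`∫ (a - M) u s = u d · s' d = √M · u d · cos (√M (d - c))`.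
Since `v` has no zero in `(c, d)`, up to replacing `(u, v)` by `(-u, -v)` the solution `u`
increases from `u c = 0`, so `0 ≤ u ≤ u d`; and `0 ≤ s ≤ s d` because `√M (d - c) ≤ π / 2`.
Hence the left side is at most `u d · s d · ∫ |a - M|`, and dividing by `u d · s d > 0` gives
the bound. -/

open MeasureTheory Set Real

/-- `u` is a solution of `u'' + a·u = 0` on `[c,d]`, with derivative function `v`. -/
def IsSolOn (a u v : ℝ → ℝ) (c d : ℝ) : Prop :=
  (∀ x ∈ Set.Icc c d, HasDerivWithinAt u (v x) (Set.Icc c d) x) ∧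
  (∀ x ∈ Set.Icc c d, v x = v c - ∫ t in c..x, a t * u t)

theorem IsPreconnected.forall_pos_or_forall_neg {s : Set ℝ} {f : ℝ → ℝ} (hs : IsPreconnected s)
    (hf : ContinuousOn f s) (hf0 : ∀ x ∈ s, f x ≠ 0) :
    (∀ x ∈ s, 0 < f x) ∨ ∀ x ∈ s, f x < 0 := by
  by_contra! h
  obtain ⟨⟨x, hx, hfx⟩, y, hy, hfy⟩ := h
  obtain ⟨z, hz, hfz⟩ := hs.intermediate_value hx hy hf ⟨hfx, hfy⟩
  exact hf0 z hz hfz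

theorem intervalIntegral.integral_mul_eq_sub_integral_primitive_mul_deriv
    {g φ φ' : ℝ → ℝ} {a b : ℝ} (hg : IntervalIntegrable g volume a b)
    (hφ : ∀ x, HasDerivAt φ (φ' x) x) (hφ' : Continuous φ') :
    ∫ x in a..b, g x * φ x
      = (∫ x in a..b, g x) * φ b - ∫ x in a..b, (∫ t in a..x, g t) * φ' x := by
  have hderiv : deriv φ = φ' := funext fun x => (hφ x).deriv
  have hφ_ac : AbsolutelyContinuousOnInterval φ a b :=
    (contDiff_one_iff_deriv.2 ⟨fun x => (hφ x).differentiableAt, hderiv ▸ hφ'⟩).contDiffOn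
      |>.absolutelyContinuousOnInterval
  have hparts := (hg.absolutelyContinuousOnInterval_intervalIntegral left_mem_uIcc)
    |>.integral_mul_deriv_eq_deriv_mul hφ_ac
  have hprimitive : ∫ x in a..b, deriv (fun y => ∫ t in a..y, g t) x * φ x
      = ∫ x in a..b, g x * φ x := by
    refine intervalIntegral.integral_congr_ae ?_
    filter_upwards [hg.ae_hasDerivAt_integral] with x hx hxab
    rw [(hx (uIoc_subset_uIcc hxab) a left_mem_uIcc).deriv]
  rw [hderiv, hprimitive, intervalIntegral.integral_same, zero_mul, sub_zero] at hparts
  linarith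

theorem intervalIntegral.integral_mul_le_mul_integral_abs {f w : ℝ → ℝ} {a b K : ℝ}
    (hab : a ≤ b) (hf : IntervalIntegrable f volume a b) (hw : ContinuousOn w (Icc a b))
    (hw₀ : ∀ x ∈ Icc a b, 0 ≤ w x) (hwK : ∀ x ∈ Icc a b, w x ≤ K) :
    ∫ x in a..b, f x * w x ≤ K * ∫ x in a..b, |f x| := by
  calc ∫ x in a..b, f x * w x ≤ ∫ x in a..b, |f x| * K := by
        refine intervalIntegral.integral_mono_on hab (hf.mul_continuousOn (uIcc_of_le hab ▸ hw))
          (hf.abs.mul_const K) fun x hx => ?_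
        calc f x * w x ≤ |f x| * w x := mul_le_mul_of_nonneg_right (le_abs_self _) (hw₀ x hx)
          _ ≤ |f x| * K := mul_le_mul_of_nonneg_left (hwK x hx) (abs_nonneg _)
    _ = K * ∫ x in a..b, |f x| := by rw [intervalIntegral.integral_mul_const, mul_comm]

theorem sin_mul_sub_mem_Icc {r c d x : ℝ} (hr : 0 ≤ r) (hrd : r * (d - c) ≤ π / 2)
    (hx : x ∈ Icc c d) : sin (r * (x - c)) ∈ Icc 0 (sin (r * (d - c))) := by
  have h₀ : 0 ≤ r * (x - c) := mul_nonneg hr (sub_nonneg.2 hx.1)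
  have h₁ : r * (x - c) ≤ r * (d - c) := by gcongr; exact hx.2
  exact ⟨sin_nonneg_of_nonneg_of_le_pi h₀ (by linarith [pi_pos]),
    sin_le_sin_of_le_of_le_pi_div_two (by linarith [pi_pos]) hrd h₁⟩

namespace IsSolOn

variable {a u v : ℝ → ℝ} {c d : ℝ}

theorem continuousOn (hsol : IsSolOn a u v c d) : ContinuousOn u (Icc c d) :=
  fun x hx => (hsol.1 x hx).continuousWithinAt

theorem continuousOn_deriv (hsol : IsSolOn a u v c d) (hcd : c ≤ d)
    (ha : IntervalIntegrable a volume c d) : ContinuousOn v (Icc c d) := by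
  have hau : IntervalIntegrable (fun t => a t * u t) volume c d :=
    ha.mul_continuousOn (uIcc_of_le hcd ▸ hsol.continuousOn)
  have hprim := (hau.absolutelyContinuousOnInterval_intervalIntegral left_mem_uIcc).continuousOn
  rw [uIcc_of_le hcd] at hprim
  exact (continuousOn_const.sub hprim).congr hsol.2

theorem neg (hsol : IsSolOn a u v c d) : IsSolOn a (-u) (-v) c d := by
  refine ⟨fun x hx => (hsol.1 x hx).neg, fun x hx => ?_⟩
  simp only [Pi.neg_apply, mul_neg, intervalIntegral.integral_neg, hsol.2 x hx]
  ring

theorem strictMonoOn (hsol : IsSolOn a u v c d) (hv : ∀ x ∈ Ioo c d, 0 < v x) :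
    StrictMonoOn u (Icc c d) := by
  refine strictMonoOn_of_deriv_pos (convex_Icc c d) hsol.continuousOn fun x hx => ?_
  rw [interior_Icc] at hx
  rw [((hsol.1 x (Ioo_subset_Icc_self hx)).hasDerivAt (Icc_mem_nhds hx.1 hx.2)).deriv]
  exact hv x hx

theorem integral_lagrange_identity (hsol : IsSolOn a u v c d) (hcd : c ≤ d)
    (ha : IntervalIntegrable a volume c d) {φ φ' φ'' : ℝ → ℝ} (hφ : ∀ x, HasDerivAt φ (φ' x) x)
    (hφ' : ∀ x, HasDerivAt φ' (φ'' x) x) (hφ'' : Continuous φ'') :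
    ∫ x in c..d, (a x * φ x + φ'' x) * u x
      = (v c * φ c - u c * φ' c) - (v d * φ d - u d * φ' d) := by
  have hu : ContinuousOn u (uIcc c d) := uIcc_of_le hcd ▸ hsol.continuousOn
  have hv : ContinuousOn v (uIcc c d) := uIcc_of_le hcd ▸ hsol.continuousOn_deriv hcd ha
  have hφ_cont : Continuous φ := continuous_iff_continuousAt.2 fun x => (hφ x).continuousAt
  have hφ'_cont : Continuous φ' := continuous_iff_continuousAt.2 fun x => (hφ' x).continuousAt
  have hau : IntervalIntegrable (fun x => a x * u x) volume c d := ha.mul_continuousOn hu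
  have hprimitive : ∀ x ∈ uIcc c d, ∫ t in c..x, a t * u t = v c - v x := fun x hx => by
    rw [hsol.2 x (uIcc_of_le hcd ▸ hx)]; ring
  have hφ'_int : ∫ x in c..d, φ' x = φ d - φ c :=
    intervalIntegral.integral_eq_sub_of_hasDerivAt (fun x _ => hφ x)
      (hφ'_cont.intervalIntegrable c d)
  have hvφ' : IntervalIntegrable (fun x => v x * φ' x) volume c d :=
    (hv.mul hφ'_cont.continuousOn).intervalIntegrable
  have huφ'' : IntervalIntegrable (fun x => u x * φ'' x) volume c d :=
    (hu.mul hφ''.continuousOn).intervalIntegrable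
  have h_au : ∫ x in c..d, a x * u x * φ x
      = (v c - v d) * φ d - (v c * (φ d - φ c) - ∫ x in c..d, v x * φ' x) := by
    rw [intervalIntegral.integral_mul_eq_sub_integral_primitive_mul_deriv hau hφ hφ'_cont,
      hprimitive d right_mem_uIcc, ← hφ'_int, ← intervalIntegral.integral_const_mul,
      ← intervalIntegral.integral_sub ((hφ'_cont.intervalIntegrable c d).const_mul _) hvφ']
    congr 1
    exact intervalIntegral.integral_congr fun x hx => by simp only [hprimitive x hx]; ring
  have h_parts : ∫ x in c..d, (v x * φ' x + u x * φ'' x) = u d * φ' d - u c * φ' c :=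
    intervalIntegral.integral_deriv_mul_eq_sub_of_hasDerivWithinAt
      (fun x hx => by rw [uIcc_of_le hcd] at hx ⊢; exact hsol.1 x hx)
      (fun x _ => (hφ' x).hasDerivWithinAt) hv.intervalIntegrable (hφ''.intervalIntegrable c d)
  rw [intervalIntegral.integral_add hvφ' huφ''] at h_parts
  have h_split : ∫ x in c..d, (a x * φ x + φ'' x) * u x
      = (∫ x in c..d, a x * u x * φ x) + ∫ x in c..d, u x * φ'' x := by
    rw [← intervalIntegral.integral_add (hau.mul_continuousOn hφ_cont.continuousOn) huφ'']
    exact intervalIntegral.integral_congr fun x _ => by ring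
  rw [h_split, h_au]
  linarith

theorem integral_sub_mul_mul_sin (hsol : IsSolOn a u v c d) (hcd : c ≤ d)
    (ha : IntervalIntegrable a volume c d) (huc : u c = 0) (hvd : v d = 0) {M : ℝ}
    (hM : 0 ≤ M) :
    ∫ x in c..d, (a x - M) * (u x * sin (√M * (x - c)))
      = u d * (√M * cos (√M * (d - c))) := by
  have hlinear (x : ℝ) : HasDerivAt (fun y => √M * (y - c)) √M x := by
    simpa using ((hasDerivAt_id x).sub_const c).const_mul √M
  have hsin (x : ℝ) :
      HasDerivAt (fun y => sin (√M * (y - c))) (√M * cos (√M * (x - c))) x := by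
    simpa [mul_comm] using (hlinear x).sin
  have hcos (x : ℝ) :
      HasDerivAt (fun y => √M * cos (√M * (y - c))) (-(M * sin (√M * (x - c)))) x := by
    refine (((hlinear x).cos).const_mul √M).congr_deriv ?_
    linear_combination -sin (√M * (x - c)) * Real.mul_self_sqrt hM
  have hlagrange := hsol.integral_lagrange_identity hcd ha hsin hcos (by fun_prop)
  simp only [huc, hvd, sub_self, mul_zero, sin_zero, zero_mul, zero_sub, neg_neg] at hlagrange
  rw [← hlagrange]
  exact intervalIntegral.integral_congr fun x _ => by ring

end IsSolOn

theorem stmt2_general (c d M : ℝ) (hcd : c < d) (hM : 0 < M)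
    (hMcd : Real.sqrt M * (d - c) ≤ Real.pi / 2)
    (a u v : ℝ → ℝ)
    (ha : IntegrableOn a (Set.Ioo c d))
    (hsol : IsSolOn a u v c d)
    (huc : u c = 0) (hvd : v d = 0)
    (hne : ∀ x ∈ Set.Ioo c d, u x ≠ 0 ∧ v x ≠ 0) :
    Real.sqrt M * Real.cot (Real.sqrt M * (d - c)) ≤ ∫ x in c..d, |a x - M| := by
  have ha' : IntervalIntegrable a volume c d :=
    (intervalIntegrable_iff_integrableOn_Ioo_of_le hcd.le).2 ha
  wlog hv : ∀ x ∈ Ioo c d, 0 < v x generalizing u v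
  · rcases isPreconnected_Ioo.forall_pos_or_forall_neg
      ((hsol.continuousOn_deriv hcd.le ha').mono Ioo_subset_Icc_self) (fun x hx => (hne x hx).2)
      with hpos | hneg
    · exact this u v hsol huc hvd hne hpos
    · exact this (-u) (-v) hsol.neg (by simp [huc]) (by simp [hvd])
        (fun x hx => by simpa using hne x hx) (fun x hx => by simpa using hneg x hx)
  have hmono := hsol.strictMonoOn hv
  have hu (x : ℝ) (hx : x ∈ Icc c d) : u x ∈ Icc 0 (u d) :=
    ⟨huc ▸ hmono.monotoneOn (left_mem_Icc.2 hcd.le) hx hx.1,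
      hmono.monotoneOn hx (right_mem_Icc.2 hcd.le) hx.2⟩
  have hud : 0 < u d := huc ▸ hmono (left_mem_Icc.2 hcd.le) (right_mem_Icc.2 hcd.le) hcd
  have hr : 0 < √M := Real.sqrt_pos.2 hM
  have hsin (x : ℝ) (hx : x ∈ Icc c d) : sin (√M * (x - c)) ∈ Icc 0 (sin (√M * (d - c))) :=
    sin_mul_sub_mem_Icc hr.le hMcd hx
  have hsin_pos : 0 < sin (√M * (d - c)) :=
    sin_pos_of_pos_of_lt_pi (mul_pos hr (by linarith)) (by linarith [pi_pos])
  have hbound := intervalIntegral.integral_mul_le_mul_integral_abs hcd.le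
    (ha'.sub intervalIntegrable_const) (hsol.continuousOn.mul (by fun_prop))
    (f := fun x => a x - M) (w := fun x => u x * sin (√M * (x - c)))
    (fun x hx => mul_nonneg (hu x hx).1 (hsin x hx).1)
    (fun x hx => mul_le_mul (hu x hx).2 (hsin x hx).2 (hsin x hx).1 hud.le)
  rw [hsol.integral_sub_mul_mul_sin hcd.le ha' huc hvd hM.le] at hbound
  rw [cot_eq_cos_div_sin, ← mul_div_assoc, div_le_iff₀ hsin_pos]
  exact le_of_mul_le_mul_left (by linarith) hud

theorem stmt2 (c d M : ℝ) (hcd : c < d) (hM : 0 < M)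
    (hMcd : Real.sqrt M * (d - c) ≤ Real.pi / 2)
    (a u v : ℝ → ℝ)
    (ha : IntegrableOn a (Set.Ioo c d))
    (hsol : IsSolOn a u v c d)
    (hnt : ∃ x ∈ Set.Icc c d, u x ≠ 0)
    (huc : u c = 0) (hvd : v d = 0)
    (hne : ∀ x ∈ Set.Ioo c d, u x ≠ 0 ∧ v x ≠ 0) :
    Real.sqrt M * Real.cot (Real.sqrt M * (d - c)) ≤ ∫ x in c..d, |a x - M| :=
  stmt2_general c d M hcd hM hMcd a u v ha hsol huc hvd hne
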